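/- Let R be a commutative domain in which 2 ≠ 0, and let a, b, c, d, e, w₁, w₂ ∈ R satisfy 2w₁ = c − ae, 2w₂ = c + ae, and c² − 4d = e²(a² − 4b). Set f = x² − ax + b, g = y² − cy + d, h₁ = y − ex − w₁, and h₂ = y + ex − w₂ in R[x,y]. Then w₁·w₂ = d − e²b, the polynomial identity h₁·h₂ = g − e²·f holds in R[x,y], and the quotient R[x,y]/(f, g, h₁) is isomorphic as an R-algebra to R[x]/(f). -/

import Mathlib

open MvPolynomial

noncomputable section

/-- The ideal `(f, g, h₁) = (x² − ax + b, y² − cy + d, y − ex − w₁)` in `R[x,y]`. -/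
abbrev fgh₁Ideal (R : Type) [CommRing R] (a b c d e w₁ : R) :
    Ideal (MvPolynomial (Fin 2) R) :=
  Ideal.span {(X 0 : MvPolynomial (Fin 2) R) ^ 2 - C a * X 0 + C b,
    (X 1 : MvPolynomial (Fin 2) R) ^ 2 - C c * X 1 + C d,
    (X 1 : MvPolynomial (Fin 2) R) - C e * X 0 - C w₁}

/-!
Halving `2w₁ = c − ae` and `2w₂ = c + ae` gives `w₁ + w₂ = c` and `w₂ − w₁ = ae`, and the
discriminant condition turns `4w₁w₂ = c² − a²e²` into `w₁w₂ = d − e²b`; these three relations are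
exactly what the identity `h₁h₂ = g − e²f` needs. Hence `g ∈ (f, h₁)`, and modulo `h₁` the variable
`y` becomes the polynomial `ex + w₁` in `x`, so eliminating `y` identifies `R[x,y]/(f, g, h₁)`
with `R[x]/(f)`: the inverse sends `x` to the root `α` of `f` and `y` to `eα + w₁`.
-/

section Coefficients

variable {R : Type*} [CommRing R] [IsDomain R] {a b c d e w₁ w₂ : R}

theorem add_eq_of_two_mul_eq (h2 : (2 : R) ≠ 0) (hw₁ : 2 * w₁ = c - a * e)
    (hw₂ : 2 * w₂ = c + a * e) : w₁ + w₂ = c :=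
  mul_left_cancel₀ h2 (by linear_combination hw₁ + hw₂)

theorem sub_eq_of_two_mul_eq (h2 : (2 : R) ≠ 0) (hw₁ : 2 * w₁ = c - a * e)
    (hw₂ : 2 * w₂ = c + a * e) : w₂ - w₁ = a * e :=
  mul_left_cancel₀ h2 (by linear_combination hw₂ - hw₁)

theorem mul_eq_of_two_mul_eq (h2 : (2 : R) ≠ 0) (hw₁ : 2 * w₁ = c - a * e)
    (hw₂ : 2 * w₂ = c + a * e) (he : c ^ 2 - 4 * d = e ^ 2 * (a ^ 2 - 4 * b)) :
    w₁ * w₂ = d - e ^ 2 * b :=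
  mul_left_cancel₀ (mul_ne_zero h2 h2)
    (by linear_combination (2 * w₂) * hw₁ + (c - a * e) * hw₂ + he)

end Coefficients

theorem sub_mul_add_sub_eq {S : Type*} [CommRing S] {a b c d e w₁ w₂ : S}
    (hsum : w₁ + w₂ = c) (hdiff : w₂ - w₁ = a * e) (hprod : w₁ * w₂ = d - e ^ 2 * b) (x y : S) :
    (y - e * x - w₁) * (y + e * x - w₂) = (y ^ 2 - c * y + d) - e ^ 2 * (x ^ 2 - a * x + b) := by
  linear_combination (-y) * hsum + (e * x) * hdiff + hprod

theorem Ideal.Quotient.mk_aeval {R S : Type*} [CommRing R] [CommRing S] [Algebra R S]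
    (J : Ideal S) (s : S) (q : Polynomial R) :
    Ideal.Quotient.mk J (Polynomial.aeval s q) = Polynomial.aeval (Ideal.Quotient.mk J s) q :=
  (Polynomial.aeval_algHom_apply (Ideal.Quotient.mkₐ R J) s q).symm

namespace AdjoinRoot

variable {R : Type*} [CommRing R] (f p : Polynomial R)

def aevalRootGraph : MvPolynomial (Fin 2) R →ₐ[R] AdjoinRoot f :=
  aeval ![root f, Polynomial.aeval (root f) p]

@[simp]
theorem aevalRootGraph_X_zero : aevalRootGraph f p (X 0) = root f := by
  simp [aevalRootGraph]

@[simp]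
theorem aevalRootGraph_X_one : aevalRootGraph f p (X 1) = Polynomial.aeval (root f) p := by
  simp [aevalRootGraph]

variable {f p} {I : Ideal (MvPolynomial (Fin 2) R)}

def liftQuotientAevalRootGraph (hI : I ≤ RingHom.ker (aevalRootGraph f p)) :
    (MvPolynomial (Fin 2) R ⧸ I) →ₐ[R] AdjoinRoot f :=
  Ideal.Quotient.liftₐ I (aevalRootGraph f p) fun _ hq => RingHom.mem_ker.mp (hI hq)

@[simp]
theorem liftQuotientAevalRootGraph_mk (hI : I ≤ RingHom.ker (aevalRootGraph f p))
    (q : MvPolynomial (Fin 2) R) :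
    liftQuotientAevalRootGraph hI (Ideal.Quotient.mk I q) = aevalRootGraph f p q :=
  rfl

def liftAlgHomQuotientX (hf : Polynomial.aeval (X 0) f ∈ I) :
    AdjoinRoot f →ₐ[R] MvPolynomial (Fin 2) R ⧸ I :=
  liftAlgHom f (Algebra.ofId R _) (Ideal.Quotient.mk I (X 0)) <| by
    rwa [Algebra.toRingHom_ofId, ← Polynomial.aeval_def, ← Ideal.Quotient.mk_aeval,
      Ideal.Quotient.eq_zero_iff_mem]

@[simp]
theorem liftAlgHomQuotientX_root (hf : Polynomial.aeval (X 0) f ∈ I) :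
    liftAlgHomQuotientX hf (root f) = Ideal.Quotient.mk I (X 0) :=
  liftAlgHom_root ..

theorem aeval_X_zero_mem_ker_aevalRootGraph :
    Polynomial.aeval (X 0) f ∈ RingHom.ker (aevalRootGraph f p) := by
  rw [RingHom.mem_ker, ← Polynomial.aeval_algHom_apply, aevalRootGraph_X_zero, aeval_eq, mk_self]

theorem X_one_sub_aeval_mem_ker_aevalRootGraph :
    X 1 - Polynomial.aeval (X 0) p ∈ RingHom.ker (aevalRootGraph f p) := by
  rw [RingHom.mem_ker, map_sub, ← Polynomial.aeval_algHom_apply, aevalRootGraph_X_zero,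
    aevalRootGraph_X_one, sub_self]

def quotientAlgEquivOfGraph (hf : Polynomial.aeval (X 0) f ∈ I)
    (hp : X 1 - Polynomial.aeval (X 0) p ∈ I) (hI : I ≤ RingHom.ker (aevalRootGraph f p)) :
    (MvPolynomial (Fin 2) R ⧸ I) ≃ₐ[R] AdjoinRoot f :=
  AlgEquiv.ofAlgHom (liftQuotientAevalRootGraph hI) (liftAlgHomQuotientX hf)
    (algHom_ext (by simp))
    (by
      refine Ideal.Quotient.algHom_ext R (MvPolynomial.algHom_ext fun i => ?_)
      fin_cases i
      · simp
      · show liftAlgHomQuotientX hf (aevalRootGraph f p (X 1)) = Ideal.Quotient.mk I (X 1)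
        rw [aevalRootGraph_X_one, ← Polynomial.aeval_algHom_apply, liftAlgHomQuotientX_root,
          ← Ideal.Quotient.mk_aeval, Ideal.Quotient.eq, ← neg_mem_iff, neg_sub]
        exact hp)

end AdjoinRoot

theorem nonempty_quotient_fgh₁Ideal_algEquiv {R : Type} [CommRing R] {a b c d e w₁ w₂ : R}
    (hid : ((X 1 : MvPolynomial (Fin 2) R) - C e * X 0 - C w₁) *
        ((X 1 : MvPolynomial (Fin 2) R) + C e * X 0 - C w₂) =
      ((X 1 : MvPolynomial (Fin 2) R) ^ 2 - C c * X 1 + C d) -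
        C (e ^ 2) * ((X 0 : MvPolynomial (Fin 2) R) ^ 2 - C a * X 0 + C b)) :
    Nonempty ((MvPolynomial (Fin 2) R ⧸ fgh₁Ideal R a b c d e w₁) ≃ₐ[R]
      AdjoinRoot (Polynomial.X ^ 2 - Polynomial.C a * Polynomial.X +
        Polynomial.C b : Polynomial R)) := by
  set f : Polynomial R := Polynomial.X ^ 2 - Polynomial.C a * Polynomial.X + Polynomial.C b
  set p : Polynomial R := Polynomial.C e * Polynomial.X + Polynomial.C w₁
  have hf : Polynomial.aeval (X 0 : MvPolynomial (Fin 2) R) f = X 0 ^ 2 - C a * X 0 + C b := by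
    simp [f]
  have hp :
      X 1 - Polynomial.aeval (X 0 : MvPolynomial (Fin 2) R) p = X 1 - C e * X 0 - C w₁ := by
    simp only [p, map_add, map_mul, Polynomial.aeval_C, Polynomial.aeval_X, algebraMap_eq]
    ring
  have hf₀ : X 0 ^ 2 - C a * X 0 + C b ∈ RingHom.ker (AdjoinRoot.aevalRootGraph f p) := by
    rw [← hf]; exact AdjoinRoot.aeval_X_zero_mem_ker_aevalRootGraph
  have hh₁ : X 1 - C e * X 0 - C w₁ ∈ RingHom.ker (AdjoinRoot.aevalRootGraph f p) := by
    rw [← hp]; exact AdjoinRoot.X_one_sub_aeval_mem_ker_aevalRootGraph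
  have hg : X 1 ^ 2 - C c * X 1 + C d ∈ RingHom.ker (AdjoinRoot.aevalRootGraph f p) := by
    rw [eq_add_of_sub_eq' hid.symm]
    exact add_mem (Ideal.mul_mem_left _ _ hf₀) (Ideal.mul_mem_right _ _ hh₁)
  refine ⟨AdjoinRoot.quotientAlgEquivOfGraph (p := p) ?_ ?_ ?_⟩
  · rw [hf]; exact Ideal.subset_span (by simp)
  · rw [hp]; exact Ideal.subset_span (by simp)
  · exact Ideal.span_le.mpr <| Set.insert_subset_iff.mpr
      ⟨hf₀, Set.insert_subset_iff.mpr ⟨hg, Set.singleton_subset_iff.mpr hh₁⟩⟩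

/-- Let `R` be a domain with `2 ≠ 0` and let `a, b, c, d, e, w₁, w₂ ∈ R` satisfy
`2w₁ = c − ae`, `2w₂ = c + ae` and `c² − 4d = e²(a² − 4b)`.  With
`f = x² − ax + b`, `g = y² − cy + d`, `h₁ = y − ex − w₁`, `h₂ = y + ex − w₂` in
`R[x,y]`, one has `w₁w₂ = d − e²b`, the identity `h₁h₂ = g − e²f`, and
`R[x,y]/(f, g, h₁) ≅ R[x]/(f)` as `R`-algebras. -/
theorem stmt11 (R : Type) [CommRing R] [IsDomain R] (h2 : (2 : R) ≠ 0)
    (a b c d e w₁ w₂ : R)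
    (hw₁ : 2 * w₁ = c - a * e) (hw₂ : 2 * w₂ = c + a * e)
    (he : c ^ 2 - 4 * d = e ^ 2 * (a ^ 2 - 4 * b)) :
    w₁ * w₂ = d - e ^ 2 * b ∧
    ((X 1 : MvPolynomial (Fin 2) R) - C e * X 0 - C w₁) *
        ((X 1 : MvPolynomial (Fin 2) R) + C e * X 0 - C w₂) =
      ((X 1 : MvPolynomial (Fin 2) R) ^ 2 - C c * X 1 + C d) -
        C (e ^ 2) * ((X 0 : MvPolynomial (Fin 2) R) ^ 2 - C a * X 0 + C b) ∧
    Nonempty ((MvPolynomial (Fin 2) R ⧸ fgh₁Ideal R a b c d e w₁) ≃ₐ[R]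
      AdjoinRoot (Polynomial.X ^ 2 - Polynomial.C a * Polynomial.X +
        Polynomial.C b : Polynomial R)) := by
  have hsum := add_eq_of_two_mul_eq h2 hw₁ hw₂
  have hdiff := sub_eq_of_two_mul_eq h2 hw₁ hw₂
  have hprod := mul_eq_of_two_mul_eq h2 hw₁ hw₂ he
  have hid : ((X 1 : MvPolynomial (Fin 2) R) - C e * X 0 - C w₁) * (X 1 + C e * X 0 - C w₂) =
      (X 1 ^ 2 - C c * X 1 + C d) - C (e ^ 2) * (X 0 ^ 2 - C a * X 0 + C b) := by
    rw [map_pow]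
    exact sub_mul_add_sub_eq (by rw [← map_add, hsum]) (by rw [← map_sub, hdiff, map_mul])
      (by rw [← map_mul, hprod, map_sub, map_mul, map_pow]) _ _
  exact ⟨hprod, hid, nonempty_quotient_fgh₁Ideal_algEquiv hid⟩
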